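/- For every n ≥ 0 and k > 2, the word W_n^(k) contains no factor equal to 00 (two consecutive zeros). -/

import Mathlib

def kbon (k : ℕ) (n : ℕ) : ℕ :=
  if _h1 : n < k - 1 then 0
  else if _h2 : n = k - 1 then 1
  else ∑ i ∈ Finset.range k, kbon k (n - i - 1)
termination_by n
decreasing_by omega

/-- The k-bonacci morphism on words over ℕ. -/
def phiW (k : ℕ) (w : List ℕ) : List ℕ :=
  w.flatMap (fun a => if a % k = k - 1 then [a + 1] else [k * (a / k), a + 1])

/-- The finite k-bonacci word over the infinite alphabet ℕ. -/
def W (k n : ℕ) : List ℕ := (phiW k)^[n] [0]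

/-!
Every image `φ_k(a)` ends with the nonzero letter `a + 1`, and only its first letter can be `0`.
Hence in `φ_k(w)` every `0` is followed by a nonzero letter, whatever `w` is; `W_0 = 0` is too
short to contain `00`.
-/

lemma phiW_cons (k a : ℕ) (w : List ℕ) :
    phiW k (a :: w) =
      (if a % k = k - 1 then [a + 1] else [k * (a / k), a + 1]) ++ phiW k w :=
  List.flatMap_cons

lemma W_succ (k n : ℕ) : W k (n + 1) = phiW k (W k n) :=
  Function.iterate_succ_apply' _ _ _

lemma isChain_phiW (k : ℕ) (w : List ℕ) :
    (phiW k w).IsChain (fun a b => a ≠ 0 ∨ b ≠ 0) := by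
  induction w with
  | nil => exact List.isChain_nil
  | cons a w ih =>
    rw [phiW_cons]
    refine List.IsChain.append ?_ ih ?_
    · split_ifs <;> simp
    · intro x hx _ _
      left
      split_ifs at hx <;> simp at hx <;> omega

theorem no_factor_00_general (k n : ℕ) :
    ¬ [0, 0] <:+: W k n := by
  intro h
  cases n with
  | zero => simpa [W] using h.length_le
  | succ n =>
    rw [W_succ] at h
    simpa using (isChain_phiW k (W k n)).infix h

theorem no_factor_00 (k n : ℕ) (hk : 2 < k) :
    ¬ [0, 0] <:+: W k n :=
  no_factor_00_general k n
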